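/- arXiv:math/0612691 — 3 statements merged into one kernel-verified Lean document; each statement's English description precedes it below -/
import Mathlib

section
/- For integers 1 ≤ n ≤ k define a_n^{(k)} := (−1)^{k−n} Σ_{1 ≤ j₁ < ⋯ < j_{k−n} ≤ k−1} ∏_{q=1}^{k−n} j_q. Let n ≥ 1 be an integer and let φ̃ : (0,∞) → ℝ be a nonnegative measurable function such that ∫₀^∞ ξ^{max(n,1)} φ̃(ξ) dξ < ∞ (i.e. ∫₀^∞ ξ φ̃(ξ) dξ < ∞ if n = 1, and ∫₀^∞ ξⁿ φ̃(ξ) dξ < ∞ if n ≥ 2). For k ≥ max(n,2) set 𝔖_k := ∫₀^∞ φ̃(ξ)(−1 + e^{−ξ})^{k} dξ, which is finite. Then the series 𝔈_n := Σ_{k=max(n,2)}^{∞} (a_n^{(k)}/k!) 𝔖_k converges absolutely, and 𝔈_n = −∫₀^∞ φ̃(ξ)(e^{−ξ} − 1 + ξ) dξ if n = 1, while 𝔈_n = (−1)^{n} (1/n!) ∫₀^∞ φ̃(ξ) ξⁿ dξ if n ≥ 2. -/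
/-!
Up to the sign `(-1)^(k-n)`, `a_n^{(k)}` is the unsigned Stirling number of the first
kind `c(k, n)`: the elementary symmetric sums of `1, …, k-1` satisfy Stirling's recursion.
Their exponential generating function is `∑ₖ c(k, n) uᵏ / k! = (-log (1 - u))ⁿ / n!` for
`0 ≤ u < 1`, by induction on `n`: dividing the series for `n` by `1 - u` (a Cauchy product
with the geometric series) and integrating termwise over `[0, u]` gives the series for `n + 1`.
At `u = 1 - e^{-ξ}` this reads `∑ₖ c(k, n) (1 - e^{-ξ})ᵏ / k! = ξⁿ / n!`.

Since `(-1 + e^{-ξ})ᵏ = (-1)ᵏ (1 - e^{-ξ})ᵏ`, every term of `𝔈_n` is `(-1)ⁿ` times a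
nonnegative integral. Dropping the terms `k < max n 2` (only `k = 1` contributes, and only
when `n = 1`) turns the pointwise sum into the stated kernel, which is dominated by
`ξⁿ φ̃(ξ)`, so sum and integral can be exchanged.
-/

open MeasureTheory Real Set

/-- The coefficients `a_n^{(k)} = (-1)^{k-n} ∑_{1 ≤ j₁ < ⋯ < j_{k-n} ≤ k-1} ∏ j_q`
(signed Stirling numbers of the first kind). -/
noncomputable def acoef (n k : ℕ) : ℝ :=
  (-1:ℝ)^(k-n) * ∑ s ∈ (Finset.Icc 1 (k-1)).powersetCard (k-n), ∏ j ∈ s, (j:ℝ)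

open scoped Nat

theorem Multiset.esymm_cons {R : Type*} [CommSemiring R] (a : R) (s : Multiset R) (j : ℕ) :
    (a ::ₘ s).esymm (j + 1) = s.esymm (j + 1) + a * s.esymm j := by
  simp only [Multiset.esymm, Multiset.powersetCard_cons, Multiset.map_add, Multiset.sum_add,
    Multiset.map_map, Function.comp_def, Multiset.prod_cons, Multiset.sum_map_mul_left]

theorem Finset.sum_powersetCard_succ_insert_prod {α R : Type*} [DecidableEq α] [CommSemiring R]
    {a : α} {s : Finset α} (ha : a ∉ s) (f : α → R) (j : ℕ) :
    ∑ t ∈ (insert a s).powersetCard (j + 1), ∏ i ∈ t, f i =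
      ∑ t ∈ s.powersetCard (j + 1), ∏ i ∈ t, f i + f a * ∑ t ∈ s.powersetCard j, ∏ i ∈ t, f i := by
  simp only [← Finset.esymm_map_val, Finset.insert_val_of_notMem ha, Multiset.map_cons,
    Multiset.esymm_cons]

theorem Nat.sum_powersetCard_Icc_prod_eq_stirlingFirst {n k : ℕ} (h : n ≤ k) :
    ∑ s ∈ (Finset.Icc 1 (k - 1)).powersetCard (k - n), ∏ j ∈ s, j = k.stirlingFirst n := by
  induction k generalizing n with
  | zero => simp [Nat.le_zero.1 h]
  | succ k ih =>
    rcases n with _ | n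
    · rw [Finset.powersetCard_eq_empty.2 (by simp)]
      rfl
    rw [Nat.add_sub_cancel, Nat.add_sub_add_right, stirlingFirst_succ_succ]
    rcases (Nat.le_of_succ_le_succ h).eq_or_lt with rfl | hlt
    · simp [stirlingFirst_self, stirlingFirst_eq_zero_of_lt]
    obtain ⟨j, hj⟩ : ∃ j, k - n = j + 1 := ⟨k - n - 1, by omega⟩
    have hIcc : Finset.Icc 1 k = insert k (Finset.Icc 1 (k - 1)) := by
      ext i; simp only [Finset.mem_Icc, Finset.mem_insert]; omega
    rw [hIcc, hj, Finset.sum_powersetCard_succ_insert_prod (by simp; omega), ← ih hlt,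
      ← ih hlt.le, show k - (n + 1) = j by omega, hj, add_comm]

theorem neg_one_pow_sub_mul_neg_one_pow {R : Type*} [Monoid R] [HasDistribNeg R] {n k : ℕ}
    (h : n ≤ k) : (-1 : R) ^ (k - n) * (-1) ^ k = (-1) ^ n := by
  obtain ⟨j, rfl⟩ := Nat.exists_eq_add_of_le' h
  rw [Nat.add_sub_cancel, ← pow_add, ← add_assoc, ← two_mul, pow_add, pow_mul, neg_one_sq,
    one_pow, one_mul]

theorem acoef_eq_neg_one_pow_mul_stirlingFirst {n k : ℕ} (h : n ≤ k) :
    acoef n k = (-1) ^ (k - n) * k.stirlingFirst n := by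
  rw [acoef, ← Nat.sum_powersetCard_Icc_prod_eq_stirlingFirst h]
  push_cast
  rfl

theorem acoef_div_factorial_mul_integral {μ : Measure ℝ} (f : ℝ → ℝ) {n k : ℕ} (h : n ≤ k) :
    acoef n k / k ! * ∫ ξ, f ξ * (-1 + exp (-ξ)) ^ k ∂μ =
      (-1) ^ n * ((k.stirlingFirst n : ℝ) / k ! * ∫ ξ, f ξ * (1 - exp (-ξ)) ^ k ∂μ) := by
  have hsign : ∀ ξ : ℝ, f ξ * (-1 + exp (-ξ)) ^ k = (-1) ^ k * (f ξ * (1 - exp (-ξ)) ^ k) :=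
    fun ξ => by rw [show -1 + exp (-ξ) = -(1 - exp (-ξ)) by ring, neg_pow]; ring
  simp only [hsign, integral_const_mul, acoef_eq_neg_one_pow_mul_stirlingFirst h]
  rw [← neg_one_pow_sub_mul_neg_one_pow h]
  ring

theorem Nat.stirlingFirst_succ_succ_div_factorial (n j : ℕ) :
    ((j + 1).stirlingFirst (n + 1) : ℝ) / j ! =
      ∑ k ∈ Finset.range (j + 1), (k.stirlingFirst n : ℝ) / k ! := by
  induction j with
  | zero => cases n <;> simp [Nat.stirlingFirst_succ_succ]
  | succ j ih =>
    rw [Finset.sum_range_succ, ← ih, Nat.stirlingFirst_succ_succ, Nat.factorial_succ]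
    push_cast
    field_simp

theorem hasSum_sum_range_mul_pow_of_summable_norm {𝕜 : Type*} [NormedField 𝕜] [CompleteSpace 𝕜]
    {a : ℕ → 𝕜} {t : 𝕜} (ha : Summable fun k => ‖a k * t ^ k‖) (ht : ‖t‖ < 1) :
    HasSum (fun j => (∑ k ∈ Finset.range (j + 1), a k) * t ^ j)
      ((∑' k, a k * t ^ k) * (1 - t)⁻¹) := by
  rw [← tsum_geometric_of_norm_lt_one ht]
  convert hasSum_sum_range_mul_of_summable_norm ha (summable_norm_geometric_of_norm_lt_one ht)
    using 2 with j
  rw [Finset.sum_mul]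
  refine Finset.sum_congr rfl fun k hk => ?_
  rw [mul_assoc, ← pow_add, Nat.add_sub_cancel' (Finset.mem_range_succ_iff.1 hk)]

theorem HasSum.ite_le_sub_sum_range {G : Type*} [AddCommGroup G] [TopologicalSpace G]
    [IsTopologicalAddGroup G] {f : ℕ → G} {a : G} (hf : HasSum f a) (m : ℕ) :
    HasSum (fun k => if m ≤ k then f k else 0) (a - ∑ k ∈ Finset.range m, f k) := by
  rw [← hasSum_nat_add_iff' m, Finset.sum_eq_zero fun k hk => if_neg (by simpa using hk),
    sub_zero]
  simpa using (hasSum_nat_add_iff' m).2 hf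

theorem MeasureTheory.hasSum_integral_of_nonneg_of_hasSum {α ι : Type*} [MeasurableSpace α]
    [Countable ι] {μ : Measure α} {F : ι → α → ℝ} {f : α → ℝ}
    (hF_meas : ∀ i, AEStronglyMeasurable (F i) μ) (hF_nonneg : ∀ i, 0 ≤ᵐ[μ] F i)
    (hf : Integrable f μ) (h_lim : ∀ᵐ a ∂μ, HasSum (fun i => F i a) (f a)) :
    HasSum (fun i => ∫ a, F i a ∂μ) (∫ a, f a ∂μ) := by
  refine hasSum_integral_of_dominated_convergence F hF_meas
    (fun i => (hF_nonneg i).mono fun a ha => (Real.norm_of_nonneg ha).le)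
    (h_lim.mono fun a ha => ha.summable) (hf.congr ?_) h_lim
  filter_upwards [h_lim] with a ha using ha.tsum_eq.symm

theorem hasDerivAt_neg_log_one_sub_pow_div_factorial (n : ℕ) {t : ℝ} (ht : t < 1) :
    HasDerivAt (fun s => (-log (1 - s)) ^ (n + 1) / (n + 1)!)
      ((-log (1 - t)) ^ n / n ! * (1 - t)⁻¹) t := by
  have hlog : HasDerivAt (fun s => -log (1 - s)) (1 - t)⁻¹ t := by
    refine ((((hasDerivAt_id' t).const_sub 1).log (by linarith)).neg).congr_deriv ?_
    field_simp
  refine ((hlog.pow (n + 1)).div_const ((n + 1)! : ℝ)).congr_deriv ?_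
  rw [Nat.factorial_succ]
  push_cast
  field_simp

theorem integral_neg_log_one_sub_pow_div_factorial_mul_inv {u : ℝ} (hu : u < 1) (n : ℕ) :
    ∫ t in (0)..u, (-log (1 - t)) ^ n / n ! * (1 - t)⁻¹ =
      (-log (1 - u)) ^ (n + 1) / (n + 1)! := by
  have hlt : ∀ t ∈ uIcc 0 u, t < 1 := fun t ht => ht.2.trans_lt (max_lt one_pos hu)
  rw [intervalIntegral.integral_eq_sub_of_hasDerivAt
    (fun t ht => hasDerivAt_neg_log_one_sub_pow_div_factorial n (hlt t ht))]
  · simp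
  · refine ContinuousOn.intervalIntegrable fun t ht => ?_
    have := hlt t ht
    fun_prop (disch := linarith)

theorem hasSum_stirlingFirst_div_factorial_mul_pow (n : ℕ) {u : ℝ} (h0 : 0 ≤ u) (h1 : u < 1) :
    HasSum (fun k => (k.stirlingFirst n : ℝ) / k ! * u ^ k) ((-log (1 - u)) ^ n / n !) := by
  induction n generalizing u with
  | zero =>
    convert hasSum_single 0 fun k hk => ?_ using 1
    · simp
    · obtain ⟨k, rfl⟩ := Nat.exists_eq_succ_of_ne_zero hk
      simp
  | succ n ih =>
    set b : ℕ → ℝ := fun j => ∑ k ∈ Finset.range (j + 1), (k.stirlingFirst n : ℝ) / (k ! : ℝ)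
    have hb_nonneg : ∀ j, 0 ≤ b j := fun j => Finset.sum_nonneg fun k _ => by positivity
    have hcauchy : ∀ t ∈ Ioc 0 u,
        HasSum (fun j => b j * t ^ j) ((-log (1 - t)) ^ n / n ! * (1 - t)⁻¹) := by
      intro t ht
      have hsum := ih ht.1.le (ht.2.trans_lt h1)
      rw [← hsum.tsum_eq]
      refine hasSum_sum_range_mul_pow_of_summable_norm ?_ ?_
      · simpa only [Real.norm_eq_abs, summable_abs_iff] using hsum.summable
      · rw [Real.norm_of_nonneg ht.1.le]
        exact ht.2.trans_lt h1
    have hterms := hasSum_integral_of_nonneg_of_hasSum (μ := volume.restrict (Ioc 0 u))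
      (F := fun j t => b j * t ^ j) (fun j => by fun_prop)
      (fun j => (ae_restrict_iff' measurableSet_Ioc).2 (ae_of_all _ fun t ht =>
        mul_nonneg (hb_nonneg j) (pow_nonneg ht.1.le j)))
      ?_ ((ae_restrict_iff' measurableSet_Ioc).2 (ae_of_all _ hcauchy))
    · have hterm : ∀ j : ℕ, b j * ((u ^ (j + 1) - 0 ^ (j + 1)) / (j + 1)) =
          ((j + 1).stirlingFirst (n + 1) : ℝ) / (j + 1)! * u ^ (j + 1) := fun j => by
        rw [show b j = _ from (Nat.stirlingFirst_succ_succ_div_factorial n j).symm,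
          Nat.factorial_succ, zero_pow j.succ_ne_zero, sub_zero]
        push_cast
        field_simp
      simp only [← intervalIntegral.integral_of_le h0, intervalIntegral.integral_const_mul,
        integral_pow, integral_neg_log_one_sub_pow_div_factorial_mul_inv h1, hterm] at hterms
      rw [← hasSum_nat_add_iff' 1]
      simpa using hterms
    · refine (ContinuousOn.integrableOn_Icc fun t ht => ?_).mono_set Ioc_subset_Icc_self
      have := ht.2.trans_lt h1
      fun_prop (disch := linarith)

theorem one_sub_exp_neg_nonneg {ξ : ℝ} (hξ : 0 ≤ ξ) : 0 ≤ 1 - exp (-ξ) :=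
  sub_nonneg.2 (exp_le_one_iff.2 (neg_nonpos.2 hξ))

theorem hasSum_stirlingFirst_div_factorial_mul_one_sub_exp_neg_pow (n : ℕ) {ξ : ℝ} (hξ : 0 ≤ ξ) :
    HasSum (fun k => (k.stirlingFirst n : ℝ) / k ! * (1 - exp (-ξ)) ^ k) (ξ ^ n / n !) := by
  have h := hasSum_stirlingFirst_div_factorial_mul_pow n (one_sub_exp_neg_nonneg hξ)
    (sub_lt_self 1 (exp_pos (-ξ)))
  rwa [sub_sub_cancel, log_exp, neg_neg] at h

theorem hasSum_ite_stirlingFirst_div_factorial_mul_one_sub_exp_neg_pow {n : ℕ} (hn : 1 ≤ n)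
    {ξ : ℝ} (hξ : 0 ≤ ξ) :
    HasSum (fun k => (if max n 2 ≤ k then (k.stirlingFirst n : ℝ) / k ! else 0) *
        (1 - exp (-ξ)) ^ k)
      (if n = 1 then exp (-ξ) - 1 + ξ else ξ ^ n / n !) := by
  have h := (hasSum_stirlingFirst_div_factorial_mul_one_sub_exp_neg_pow n
    hξ).ite_le_sub_sum_range (max n 2)
  have hval : ξ ^ n / (n ! : ℝ) - ∑ k ∈ Finset.range (max n 2),
      (k.stirlingFirst n : ℝ) / k ! * (1 - exp (-ξ)) ^ k =
        if n = 1 then exp (-ξ) - 1 + ξ else ξ ^ n / n ! := by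
    split_ifs with h1
    · subst h1
      simp [Finset.sum_range_succ, Nat.stirlingFirst_self]
      ring
    · rw [max_eq_left (by omega), Finset.sum_eq_zero fun k hk => ?_, sub_zero]
      rw [Nat.stirlingFirst_eq_zero_of_lt (Finset.mem_range.1 hk)]
      simp
  rw [hval] at h
  simpa only [ite_mul, zero_mul] using h

theorem abs_neg_one_add_exp_neg_pow_le {ξ : ℝ} (hξ : 0 ≤ ξ) {n k : ℕ} (hk : n ≤ k) :
    |-1 + exp (-ξ)| ^ k ≤ ξ ^ n := by
  have h0 := one_sub_exp_neg_nonneg hξ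
  rw [show -1 + exp (-ξ) = -(1 - exp (-ξ)) by ring, abs_neg, abs_of_nonneg h0]
  calc (1 - exp (-ξ)) ^ k ≤ (1 - exp (-ξ)) ^ n :=
        pow_le_pow_of_le_one h0 (sub_le_self 1 (exp_pos (-ξ)).le) hk
    _ ≤ ξ ^ n := pow_le_pow_left₀ h0 (by linarith [add_one_le_exp (-ξ)]) n

theorem integrableOn_mul_neg_one_add_exp_neg_pow {f : ℝ → ℝ} {n k : ℕ} (hk : n ≤ k)
    (hmeas : Measurable f) (hint : IntegrableOn (fun ξ => ξ ^ n * f ξ) (Ioi 0)) :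
    IntegrableOn (fun ξ => f ξ * (-1 + exp (-ξ)) ^ k) (Ioi 0) := by
  refine Integrable.mono hint (by fun_prop)
    ((ae_restrict_iff' measurableSet_Ioi).2 (ae_of_all _ fun ξ hξ => ?_))
  rw [norm_mul, norm_mul, norm_pow, norm_pow, Real.norm_eq_abs, Real.norm_eq_abs,
    Real.norm_of_nonneg (hξ.le), mul_comm]
  exact mul_le_mul_of_nonneg_right (abs_neg_one_add_exp_neg_pow_le hξ.le hk) (abs_nonneg _)

theorem ite_exp_neg_sub_one_add_mem_Icc (n : ℕ) {ξ : ℝ} (hξ : 0 ≤ ξ) :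
    (if n = 1 then exp (-ξ) - 1 + ξ else ξ ^ n / (n ! : ℝ)) ∈ Icc 0 (ξ ^ n) := by
  split_ifs with h1
  · subst h1
    constructor <;> linarith [add_one_le_exp (-ξ), exp_le_one_iff.2 (neg_nonpos.2 hξ)]
  · exact ⟨by positivity, div_le_self (pow_nonneg hξ n) (mod_cast n.factorial_pos)⟩

theorem hasSum_ite_stirlingFirst_div_factorial_mul_integral {f : ℝ → ℝ} {n : ℕ} (hn : 1 ≤ n)
    (hmeas : Measurable f) (hpos : ∀ ξ ∈ Ioi (0 : ℝ), 0 ≤ f ξ)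
    (hint : IntegrableOn (fun ξ => ξ ^ n * f ξ) (Ioi 0)) :
    HasSum (fun k => (if max n 2 ≤ k then (k.stirlingFirst n : ℝ) / k ! else 0) *
        ∫ ξ in Ioi 0, f ξ * (1 - exp (-ξ)) ^ k)
      (∫ ξ in Ioi 0, f ξ * if n = 1 then exp (-ξ) - 1 + ξ else ξ ^ n / (n ! : ℝ)) := by
  set T : ℝ → ℝ := fun ξ => if n = 1 then exp (-ξ) - 1 + ξ else ξ ^ n / (n ! : ℝ)
  have hT_meas : Measurable T := by
    by_cases h1 : n = 1 <;> simp only [T, h1, if_true, if_false] <;> fun_prop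
  have hT_int : IntegrableOn (fun ξ => f ξ * T ξ) (Ioi 0) := by
    refine Integrable.mono hint (by fun_prop)
      ((ae_restrict_iff' measurableSet_Ioi).2 (ae_of_all _ fun ξ hξ => ?_))
    obtain ⟨hT0, hTle⟩ := ite_exp_neg_sub_one_add_mem_Icc n (hξ.le)
    rw [norm_mul, norm_mul, Real.norm_of_nonneg hT0, Real.norm_of_nonneg (pow_nonneg hξ.le n),
      mul_comm]
    exact mul_le_mul_of_nonneg_right hTle (norm_nonneg _)
  simp only [← integral_const_mul]
  refine hasSum_integral_of_nonneg_of_hasSum (fun k => by fun_prop) (fun k => ?_) hT_int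
    ((ae_restrict_iff' measurableSet_Ioi).2 (ae_of_all _ fun ξ hξ => ?_))
  · refine (ae_restrict_iff' measurableSet_Ioi).2 (ae_of_all _ fun ξ hξ => ?_)
    exact mul_nonneg (by positivity)
      (mul_nonneg (hpos ξ hξ) (pow_nonneg (one_sub_exp_neg_nonneg hξ.le) k))
  · simpa only [mul_left_comm (f ξ)] using
      (hasSum_ite_stirlingFirst_div_factorial_mul_one_sub_exp_neg_pow hn hξ.le).mul_left (f ξ)

/-- **Proposition 2.** For a nonnegative measurable `φ̃` on `(0,∞)` with
`∫₀^∞ ξ^{max(n,1)} φ̃(ξ) dξ < ∞`, the coefficients `𝔖_k = ∫₀^∞ φ̃(ξ)(-1+e^{-ξ})^k dξ`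
are finite, the series `𝔈_n = ∑_{k ≥ max(n,2)} (a_n^{(k)}/k!) 𝔖_k` converges absolutely,
and `𝔈_1 = -∫₀^∞ φ̃(ξ)(e^{-ξ}-1+ξ) dξ` while `𝔈_n = (-1)^n (1/n!) ∫₀^∞ φ̃(ξ) ξ^n dξ`
for `n ≥ 2`. -/
theorem stmt2 (n : ℕ) (hn : 1 ≤ n) (φt : ℝ → ℝ)
    (hmeas : Measurable φt) (hpos : ∀ ξ ∈ Ioi (0:ℝ), 0 ≤ φt ξ)
    (hint : IntegrableOn (fun ξ => ξ ^ (max n 1) * φt ξ) (Ioi (0:ℝ)))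
    (S : ℕ → ℝ)
    (hS : ∀ k : ℕ, S k = ∫ ξ in Ioi (0:ℝ), φt ξ * (-1 + Real.exp (-ξ))^k)
    (g : ℕ → ℝ)
    (hg : ∀ k : ℕ, g k = if max n 2 ≤ k then acoef n k / (k.factorial : ℝ) * S k else 0) :
    (∀ k : ℕ, max n 2 ≤ k →
        IntegrableOn (fun ξ => φt ξ * (-1 + Real.exp (-ξ))^k) (Ioi (0:ℝ))) ∧
    (Summable fun k => |g k|) ∧
    (∑' k : ℕ, g k) =
      (if n = 1 then -∫ ξ in Ioi (0:ℝ), φt ξ * (Real.exp (-ξ) - 1 + ξ)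
       else (-1:ℝ)^n * (1 / (n.factorial : ℝ)) * ∫ ξ in Ioi (0:ℝ), φt ξ * ξ^n) := by
  rw [max_eq_left hn] at hint
  set w : ℕ → ℝ := fun k => if max n 2 ≤ k then (k.stirlingFirst n : ℝ) / k ! else 0
  set I : ℕ → ℝ := fun k => ∫ ξ in Ioi 0, φt ξ * (1 - exp (-ξ)) ^ k
  have hsum : HasSum (fun k => w k * I k) _ :=
    hasSum_ite_stirlingFirst_div_factorial_mul_integral hn hmeas hpos hint
  have hg_eq : ∀ k, g k = (-1) ^ n * (w k * I k) := by
    intro k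
    simp only [hg, hS, w, I]
    split_ifs with hk
    · exact acoef_div_factorial_mul_integral φt ((le_max_left n 2).trans hk)
    · simp
  refine ⟨fun k hk => integrableOn_mul_neg_one_add_exp_neg_pow ((le_max_left n 2).trans hk)
    hmeas hint, ?_, ?_⟩
  · refine (summable_abs_iff.2 hsum.summable).congr fun k => ?_
    rw [hg_eq, abs_mul ((-1 : ℝ) ^ n), abs_neg_one_pow, one_mul]
  · rw [tsum_congr hg_eq, tsum_mul_left, hsum.tsum_eq]
    by_cases h1 : n = 1
    · simp [h1]
    · simp only [h1, if_false, ← mul_div_assoc, integral_div]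
      ring
end

section
/- Let β > 1 be real, k > 0, λ ∈ ℝ, and set 𝔯 := exp(iπ/(2β)). Then the integral 𝔯 ∫₀^∞ exp(−k t^{β} − i λ 𝔯 t) dt is absolutely convergent, the improper oscillatory integral ∫₀^∞ exp(i k t^{β} − i λ t) dt := lim_{R→∞} ∫₀^{R} exp(i k t^{β} − i λ t) dt exists, and the two are equal: 𝔯 ∫₀^∞ exp(−k t^{β} − i λ 𝔯 t) dt = ∫₀^∞ exp(i k t^{β} − i λ t) dt. -/
open MeasureTheory Real Complex Filter Set

/-!
In the coordinate `z = e^w` the sector `0 ≤ arg z ≤ π/(2β)` becomes the strip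
`0 ≤ Im w ≤ π/(2β)`, and `e^{ikz^β - iλz} dz` pulls back to the entire function `logSector`, with
no branch of `z^β` to choose. Cauchy's theorem on the rectangle `[log ε, log R] × [0, π/(2β)]`
relates the integral over `[ε, R]` to the one over the rotated ray `𝔯[ε, R]` (`𝔯 = rot β`), on which
`e^{ik(𝔯t)^β} = e^{-kt^β}`. The arc of radius `ε` contributes `O(ε)`. On the arc of radius `R`,
Jordan's inequality `sin(βy) ≥ 2βy/π` bounds the contribution by `(2βkR^{β-1}/π - |λ|)⁻¹`, which
tends to `0` because `β > 1`.
-/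

open scoped Topology

namespace ContourRotation

theorem integral_exp_smul_comp_exp {E : Type*} [NormedAddCommGroup E] [NormedSpace ℝ E]
    {g : ℝ → E} (hg : Continuous g) {a b : ℝ} (ha : 0 < a) (hb : 0 < b) :
    ∫ x in Real.log a..Real.log b, Real.exp x • g (Real.exp x) = ∫ t in a..b, g t := by
  simpa [Real.exp_log ha, Real.exp_log hb, Function.comp_def] using
    intervalIntegral.integral_deriv_smul_comp (a := Real.log a) (b := Real.log b)
      (fun x _ => Real.hasDerivAt_exp x) Real.continuous_exp.continuousOn hg

theorem tendsto_integral_left {E : Type*} [NormedAddCommGroup E] [NormedSpace ℝ E]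
    [CompleteSpace E] {f : ℝ → E} (hf : Continuous f) (a b : ℝ) :
    Tendsto (fun x => ∫ t in x..b, f t) (𝓝 a) (𝓝 (∫ t in a..b, f t)) :=
  (intervalIntegral.integral_hasDerivAt_left (hf.intervalIntegrable a b)
    (hf.stronglyMeasurableAtFilter _ _) hf.continuousAt).continuousAt.tendsto

theorem integral_boundary_sector_eq_zero_of_logCoord {E : Type*} [NormedAddCommGroup E]
    [NormedSpace ℂ E] [CompleteSpace E] {G : ℂ → E} (hG : Differentiable ℂ G)
    {f₀ f₁ : ℝ → E} (hf₀ : Continuous f₀) (hf₁ : Continuous f₁) {θ : ℝ}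
    (hG₀ : ∀ x : ℝ, G x = Real.exp x • f₀ (Real.exp x))
    (hG₁ : ∀ x : ℝ, G (x + θ * I) = Real.exp x • f₁ (Real.exp x))
    (hleft : Tendsto (fun x : ℝ => ∫ y in (0 : ℝ)..θ, G (x + y * I)) atBot (𝓝 0))
    {R : ℝ} (hR : 0 < R) :
    (∫ t in (0 : ℝ)..R, f₀ t) - (∫ t in (0 : ℝ)..R, f₁ t)
      + I • ∫ y in (0 : ℝ)..θ, G (Real.log R + y * I) = 0 := by
  set arc := fun x : ℝ => ∫ y in (0 : ℝ)..θ, G (x + y * I)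
  have hrect : ∀ ε ∈ Ioi (0 : ℝ), (∫ t in ε..R, f₀ t) - (∫ t in ε..R, f₁ t)
      + I • arc (Real.log R) - I • arc (Real.log ε) = 0 := by
    intro ε hε
    have h := integral_boundary_rect_eq_zero_of_differentiableOn G (Real.log ε)
      (Real.log R + θ * I) hG.differentiableOn
    simpa only [add_re, add_im, mul_re, mul_im, ofReal_re, ofReal_im, I_re, I_im, mul_zero,
      zero_mul, mul_one, sub_self, add_zero, zero_add, ofReal_zero, hG₀, hG₁,
      integral_exp_smul_comp_exp hf₀ hε hR, integral_exp_smul_comp_exp hf₁ hε hR] using h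
  have hlim := (((tendsto_integral_left hf₀ 0 R).sub (tendsto_integral_left hf₁ 0 R)).add
    (tendsto_const_nhds (x := I • arc (Real.log R)))).mono_left nhdsWithin_le_nhds |>.sub
      ((hleft.comp tendsto_log_nhdsGT_zero).const_smul I)
  rw [smul_zero, sub_zero] at hlim
  exact tendsto_nhds_unique (hlim.congr' (eventually_nhdsWithin_of_forall hrect))
    tendsto_const_nhds

noncomputable def rot (β : ℝ) : ℂ := Complex.exp (Complex.I * Real.pi / (2 * β))

noncomputable def oscillatory (β k l : ℝ) (t : ℝ) : ℂ :=
  Complex.exp (Complex.I * k * ((t ^ β : ℝ) : ℂ) - Complex.I * l * t)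

noncomputable def rotated (β k l : ℝ) (t : ℝ) : ℂ :=
  Complex.exp (-((k * t ^ β : ℝ) : ℂ) - Complex.I * l * rot β * t)

noncomputable def logSector (β k l : ℝ) (w : ℂ) : ℂ :=
  Complex.exp (Complex.I * k * Complex.exp (β * w) - Complex.I * l * Complex.exp w) * Complex.exp w

variable {β k l : ℝ}

theorem continuous_oscillatory (hβ : 0 ≤ β) : Continuous (oscillatory β k l) := by
  have := Real.continuous_rpow_const hβ
  unfold oscillatory
  fun_prop

theorem continuous_rotated (hβ : 0 ≤ β) : Continuous (rotated β k l) := by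
  have := Real.continuous_rpow_const hβ
  unfold rotated
  fun_prop

theorem differentiable_logSector : Differentiable ℂ (logSector β k l) := by
  unfold logSector
  fun_prop

theorem logSector_ofReal (x : ℝ) :
    logSector β k l x = Real.exp x • oscillatory β k l (Real.exp x) := by
  simp only [logSector, oscillatory, ← Real.exp_mul, real_smul]
  push_cast
  ring_nf

theorem logSector_add_mul_I (hβ : β ≠ 0) (x : ℝ) :
    logSector β k l (x + ((π / (2 * β) : ℝ) : ℂ) * I)
      = Real.exp x • (rot β * rotated β k l (Real.exp x)) := by
  have hβI : (β : ℂ) * (x + ((π / (2 * β) : ℝ) : ℂ) * I) = (β * x : ℝ) + (π / 2 : ℝ) * I := by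
    have : (β : ℂ) ≠ 0 := ofReal_ne_zero.mpr hβ
    push_cast
    field_simp
  have hrot : Complex.exp (x + ((π / (2 * β) : ℝ) : ℂ) * I) = Real.exp x * rot β := by
    rw [Complex.exp_add, rot, Complex.ofReal_exp]
    push_cast
    ring_nf
  have hI : Complex.exp ((π / 2 : ℝ) * I) = I := by
    simp [Complex.exp_mul_I, Complex.cos_pi_div_two, Complex.sin_pi_div_two]
  rw [logSector, rotated, hβI, Complex.exp_add, hI, hrot, ← Real.exp_mul, real_smul]
  push_cast
  ring_nf
  rw [I_sq]
  ring_nf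

theorem norm_logSector (β k l x y : ℝ) :
    ‖logSector β k l (x + y * I)‖
      = Real.exp x * Real.exp (-(k * Real.exp (β * x) * Real.sin (β * y))
          + l * Real.exp x * Real.sin y) := by
  have hβ : (β : ℂ) * (x + y * I) = (β * x : ℝ) + (β * y : ℝ) * I := by push_cast; ring
  rw [logSector, norm_mul, Complex.norm_exp, Complex.norm_exp, hβ]
  simp only [sub_re, add_re, add_im, mul_re, mul_im, I_re, I_im, ofReal_re, ofReal_im,
    exp_re, exp_im, zero_mul, mul_zero, mul_one, one_mul, sub_self, zero_sub,
    add_zero, zero_add, sub_neg_eq_add]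
  ring_nf

theorem mul_le_abs_of_abs_le_one {a s : ℝ} (hs : |s| ≤ 1) : a * s ≤ |a| :=
  (le_abs_self _).trans (by rw [abs_mul]; exact mul_le_of_le_one_right (abs_nonneg a) hs)

theorem tendsto_integral_logSector_atBot (hβ : 0 < β) (θ : ℝ) :
    Tendsto (fun x : ℝ => ∫ y in (0 : ℝ)..θ, logSector β k l (x + y * I)) atBot (𝓝 0) := by
  have hbound : ∀ x y : ℝ, ‖logSector β k l (x + y * I)‖
      ≤ Real.exp x * Real.exp (|k| * Real.exp (β * x) + |l| * Real.exp x) := by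
    intro x y
    rw [norm_logSector]
    refine mul_le_mul_of_nonneg_left (Real.exp_le_exp.mpr ?_) (Real.exp_pos x).le
    have h₁ := mul_le_abs_of_abs_le_one (a := -(k * Real.exp (β * x))) (abs_sin_le_one (β * y))
    have h₂ := mul_le_abs_of_abs_le_one (a := l * Real.exp x) (abs_sin_le_one y)
    simp only [abs_neg, abs_mul, abs_of_pos (Real.exp_pos _)] at h₁ h₂
    linarith
  have hC : Tendsto (fun x => Real.exp x * Real.exp (|k| * Real.exp (β * x) + |l| * Real.exp x)
      * |θ - 0|) atBot (𝓝 0) := by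
    have he := Real.tendsto_exp_atBot
    have heβ := Real.tendsto_exp_atBot.comp (tendsto_id.const_mul_atBot hβ)
    simpa using ((he.mul ((Real.continuous_exp.tendsto _).comp
      ((heβ.const_mul |k|).add (he.const_mul |l|)))).mul_const |θ - 0|)
  exact squeeze_zero_norm (fun x => intervalIntegral.norm_integral_le_of_norm_le_const
    fun y _ => hbound x y) hC

theorem integral_exp_neg_mul_le {m : ℝ} (hm : 0 < m) (θ : ℝ) :
    ∫ y in (0 : ℝ)..θ, Real.exp (-(m * y)) ≤ m⁻¹ := by
  have h := intervalIntegral.integral_comp_mul_left Real.exp (c := -m) (by linarith)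
    (a := 0) (b := θ)
  simp only [neg_mul, mul_zero, integral_exp, Real.exp_zero, smul_eq_mul] at h
  rw [h]
  have := Real.exp_pos (-(m * θ))
  rw [inv_neg, neg_mul, ← mul_neg, neg_sub]
  exact mul_le_of_le_one_right (inv_nonneg.mpr hm.le) (by linarith)

theorem norm_logSector_le (hβ : 0 < β) (hk : 0 ≤ k) (x : ℝ) {y : ℝ}
    (hy : y ∈ Icc 0 (π / (2 * β))) :
    ‖logSector β k l (x + y * I)‖
      ≤ Real.exp x * Real.exp (-((2 * β * k / π * Real.exp (β * x) - |l| * Real.exp x) * y)) := by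
  obtain ⟨hy₀, hyθ⟩ := hy
  have hβy : β * y ≤ π / 2 := by
    calc β * y ≤ β * (π / (2 * β)) := by gcongr
      _ = π / 2 := by field_simp
  have hjordan : 2 / π * (β * y) ≤ Real.sin (β * y) := mul_le_sin (by positivity) hβy
  have hsin : l * Real.sin y ≤ |l| * y := by
    calc l * Real.sin y ≤ |l * Real.sin y| := le_abs_self _
      _ ≤ |l| * y := by
        rw [abs_mul]
        exact mul_le_mul_of_nonneg_left (abs_sin_le_abs.trans_eq (abs_of_nonneg hy₀))
          (abs_nonneg l)
  rw [norm_logSector]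
  refine mul_le_mul_of_nonneg_left (Real.exp_le_exp.mpr ?_) (Real.exp_pos x).le
  have h₁ : 2 * β * k / π * Real.exp (β * x) * y ≤ k * Real.exp (β * x) * Real.sin (β * y) :=
    calc 2 * β * k / π * Real.exp (β * x) * y = k * Real.exp (β * x) * (2 / π * (β * y)) := by
          ring
      _ ≤ k * Real.exp (β * x) * Real.sin (β * y) := by gcongr
  have h₂ := mul_le_mul_of_nonneg_right hsin (Real.exp_pos x).le
  linarith

theorem norm_integral_logSector_le (hβ : 0 < β) (hk : 0 ≤ k) {x : ℝ}
    (hd : 0 < 2 * β * k / π * Real.exp ((β - 1) * x) - |l|) :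
    ‖∫ y in (0 : ℝ)..π / (2 * β), logSector β k l (x + y * I)‖
      ≤ (2 * β * k / π * Real.exp ((β - 1) * x) - |l|)⁻¹ := by
  set d := 2 * β * k / π * Real.exp ((β - 1) * x) - |l|
  have hm : 2 * β * k / π * Real.exp (β * x) - |l| * Real.exp x = Real.exp x * d := by
    rw [show β * x = (β - 1) * x + x by ring, Real.exp_add]
    ring
  have hθ : 0 ≤ π / (2 * β) := by positivity
  calc ‖∫ y in (0 : ℝ)..π / (2 * β), logSector β k l (x + y * I)‖
      ≤ ∫ y in (0 : ℝ)..π / (2 * β), Real.exp x * Real.exp (-((Real.exp x * d) * y)) := by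
        rw [← hm]
        refine intervalIntegral.norm_integral_le_of_norm_le hθ (ae_of_all _ fun y hy => ?_)
          (Continuous.intervalIntegrable (by fun_prop) _ _)
        exact norm_logSector_le hβ hk x (Ioc_subset_Icc_self hy)
    _ = Real.exp x * ∫ y in (0 : ℝ)..π / (2 * β), Real.exp (-((Real.exp x * d) * y)) :=
        intervalIntegral.integral_const_mul _ _
    _ ≤ Real.exp x * (Real.exp x * d)⁻¹ := by
        gcongr
        exact integral_exp_neg_mul_le (by positivity) _
    _ = d⁻¹ := by field_simp

theorem tendsto_integral_logSector_atTop (hβ : 1 < β) (hk : 0 < k) :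
    Tendsto (fun x : ℝ => ∫ y in (0 : ℝ)..π / (2 * β), logSector β k l (x + y * I))
      atTop (𝓝 0) := by
  have hd : Tendsto (fun x => 2 * β * k / π * Real.exp ((β - 1) * x) - |l|) atTop atTop :=
    tendsto_atTop_add_const_right _ _ <| Tendsto.const_mul_atTop (by positivity) <|
      Real.tendsto_exp_atTop.comp (tendsto_id.const_mul_atTop (by linarith))
  exact squeeze_zero_norm' ((hd.eventually_gt_atTop 0).mono fun x hx =>
    norm_integral_logSector_le (by linarith) hk.le hx) hd.inv_tendsto_atTop

theorem norm_rotated_le (t : ℝ) :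
    ‖rotated β k l t‖ ≤ Real.exp (-(k * t ^ β) + |l| * |t|) := by
  have hrot : ‖rot β‖ = 1 := by
    rw [rot, mul_div_assoc, mul_comm, ← ofReal_ofNat, ← ofReal_mul, ← ofReal_div]
    exact norm_exp_ofReal_mul_I _
  have hre : -(I * l * rot β * t).re ≤ |l| * |t| :=
    calc -(I * l * rot β * t).re ≤ ‖I * l * rot β * t‖ := (neg_le_abs _).trans (abs_re_le_norm _)
      _ = |l| * |t| := by simp [hrot]
  rw [rotated, Complex.norm_exp, sub_re, neg_re, ofReal_re, Real.exp_le_exp]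
  linarith

theorem eventually_mul_le_mul_rpow (hβ : 1 < β) (hk : 0 < k) (c : ℝ) :
    ∀ᶠ t in atTop, c * t ≤ k * t ^ β := by
  have h := (tendsto_rpow_atTop (sub_pos.mpr hβ)).const_mul_atTop hk
  filter_upwards [h.eventually_ge_atTop c, eventually_gt_atTop 0] with t hc ht
  calc c * t ≤ k * t ^ (β - 1) * t := by gcongr
    _ = k * t ^ β := by rw [Real.rpow_sub_one ht.ne']; field_simp

theorem integrableOn_rotated (hβ : 1 < β) (hk : 0 < k) :
    IntegrableOn (rotated β k l) (Ioi 0) := by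
  have hO : rotated β k l =O[atTop] fun t => Real.exp (-1 * t) := by
    refine Asymptotics.IsBigO.of_bound 1 ?_
    filter_upwards [eventually_mul_le_mul_rpow hβ hk (|l| + 1), eventually_ge_atTop 0]
      with t ht ht₀
    rw [one_mul, Real.norm_eq_abs, abs_of_pos (Real.exp_pos _)]
    refine (norm_rotated_le t).trans (Real.exp_le_exp.mpr ?_)
    rw [abs_of_nonneg ht₀]
    linarith
  exact (((continuous_rotated (by linarith)).continuousOn.locallyIntegrableOn
    measurableSet_Ici).integrableOn_of_isBigO_atTop hO
      ⟨Ioi 0, Ioi_mem_atTop 0, exp_neg_integrableOn_Ioi 0 one_pos⟩).mono_set Ioi_subset_Ici_self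

theorem integral_oscillatory_eq_sub_arc (hβ : 1 < β) {R : ℝ} (hR : 0 < R) :
    ∫ t in (0 : ℝ)..R, oscillatory β k l t = (∫ t in (0 : ℝ)..R, rot β * rotated β k l t)
      - I • ∫ y in (0 : ℝ)..π / (2 * β), logSector β k l (Real.log R + y * I) := by
  linear_combination integral_boundary_sector_eq_zero_of_logCoord (G := logSector β k l)
    (f₁ := fun t => rot β * rotated β k l t) differentiable_logSector
    (continuous_oscillatory (by linarith)) (continuous_const.mul (continuous_rotated (by linarith)))
    logSector_ofReal (logSector_add_mul_I (by positivity))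
    (tendsto_integral_logSector_atBot (by linarith) _) hR

end ContourRotation

open ContourRotation

/-- **Contour rotation for the kernel (5)–(6).** For `β > 1`, `k > 0`, `λ ∈ ℝ` and
`𝔯 = e^{iπ/(2β)}`, the integral `𝔯 ∫₀^∞ e^{-kt^β - iλ𝔯t} dt` converges absolutely, the
improper oscillatory integral `∫₀^∞ e^{ikt^β - iλt} dt = lim_{R→∞} ∫₀^R e^{ikt^β - iλt} dt`
exists, and the two coincide. -/
theorem stmt12 (β k l : ℝ) (hβ : 1 < β) (hk : 0 < k)
    (r : ℂ) (hr : r = Complex.exp (Complex.I * Real.pi / (2*β))) :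
    IntegrableOn
      (fun t : ℝ => Complex.exp (-((k * t ^ β : ℝ) : ℂ) - Complex.I * l * r * t))
      (Ioi (0:ℝ)) ∧
    Tendsto
      (fun R : ℝ => ∫ t in (0:ℝ)..R,
        Complex.exp (Complex.I * k * ((t ^ β : ℝ) : ℂ) - Complex.I * l * t))
      atTop
      (nhds (r * ∫ t in Ioi (0:ℝ),
        Complex.exp (-((k * t ^ β : ℝ) : ℂ) - Complex.I * l * r * t))) := by
  subst hr
  have hint : IntegrableOn (rotated β k l) (Ioi 0) := integrableOn_rotated hβ hk
  refine ⟨hint, ?_⟩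
  have hlim := ((intervalIntegral_tendsto_integral_Ioi 0 hint tendsto_id).const_mul (rot β)).sub
    (((tendsto_integral_logSector_atTop (l := l) hβ hk).comp tendsto_log_atTop).const_smul I)
  rw [smul_zero, sub_zero] at hlim
  refine hlim.congr' ((eventually_gt_atTop 0).mono fun R hR => ?_)
  rw [Function.comp_apply, ← intervalIntegral.integral_const_mul]
  exact (integral_oscillatory_eq_sub_arc hβ hR).symm
end

section
/- Let φ̃ : (0,∞) → ℝ be a measurable function with ∫₀^∞ ξ² |φ̃(ξ)| dξ < ∞, and define its second right-sided integral (I²_{−}φ̃)(ξ) := ∫_ξ^∞ (u − ξ) φ̃(u) du for ξ > 0. Then for every k ∈ ℝ, both of the following integrals are absolutely convergent and equal: ∫₀^∞ φ̃(ξ) [(−1 + e^{−ξ})(ik) + e^{ikξ} − 1] dξ = ∫₀^∞ (I²_{−}φ̃)(ξ) [ik e^{−ξ} − k² e^{ikξ}] dξ. -/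
open MeasureTheory Real Complex Set

/-! The bracket `G(ξ) = (-1 + e^{-ξ})(ik) + e^{ikξ} - 1` satisfies `G(0) = G'(0) = 0`, so Taylor's
formula with integral remainder gives `G(ξ) = ∫₀^ξ (ξ - u) G''(u) du`, where
`G''(u) = ik e^{-u} - k² e^{iku}` is bounded by `|k| + k²` on `[0, ∞)`. Hence
`φ̃(ξ)(ξ - u)G''(u)` on `{0 < u < ξ}` is dominated by a function with integral
`(|k| + k²) ∫₀^∞ ξ²|φ̃(ξ)| dξ < ∞`, and Fubini's theorem exchanges the two integrations; the inner
`ξ`-integral is then `(I²₋φ̃)(u)`. -/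

theorem intervalIntegral.integral_sub_smul_eq_taylor {E : Type*} [NormedAddCommGroup E]
    [NormedSpace ℝ E] [CompleteSpace E] {f f' f'' : ℝ → E}
    (hf : ∀ x, HasDerivAt f (f' x) x) (hf' : ∀ x, HasDerivAt f' (f'' x) x)
    (hf'' : Continuous f'') (a b : ℝ) :
    ∫ u in a..b, (b - u) • f'' u = f b - f a - (b - a) • f' a := by
  have hderiv : ∀ u ∈ uIcc a b,
      HasDerivAt (fun u => (b - u) • f' u + f u) ((b - u) • f'' u) u := by
    intro u _
    refine ((((hasDerivAt_id u).const_sub b).smul (hf' u)).add (hf u)).congr_deriv ?_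
    simp only [id, neg_smul, one_smul]
    abel
  rw [intervalIntegral.integral_eq_sub_of_hasDerivAt hderiv
    ((by fun_prop : Continuous fun u => (b - u) • f'' u).intervalIntegrable a b)]
  simp only [sub_self, zero_smul, zero_add]
  abel

lemma hasDerivAt_cexp_mul_ofReal (c : ℂ) (x : ℝ) :
    HasDerivAt (fun y : ℝ => cexp (c * y)) (c * cexp (c * x)) x := by
  simpa [mul_comm] using ((ofRealCLM.hasDerivAt (x := x)).const_mul c).cexp

namespace CompensatedChar

noncomputable def symbol (k ξ : ℝ) : ℂ :=
  ((-1 + Real.exp (-ξ) : ℝ) : ℂ) * (I * k) + cexp (I * k * ξ) - 1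

noncomputable def symbolDeriv (k ξ : ℝ) : ℂ :=
  I * k * (cexp (I * k * ξ) - cexp (-(ξ : ℂ)))

noncomputable def symbolDeriv2 (k ξ : ℝ) : ℂ :=
  I * k * cexp (-(ξ : ℂ)) - (k : ℂ) ^ 2 * cexp (I * k * ξ)

lemma hasDerivAt_symbol (k x : ℝ) : HasDerivAt (symbol k) (symbolDeriv k x) x := by
  have hre : HasDerivAt (fun y : ℝ => -1 + Real.exp (-y)) (-Real.exp (-x)) x := by
    simpa using ((hasDerivAt_neg x).exp).const_add (-1)
  refine (((hre.ofReal_comp.mul_const (I * k)).add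
    (hasDerivAt_cexp_mul_ofReal (I * k) x)).sub_const 1).congr_deriv ?_
  simp only [symbolDeriv, ofReal_neg, ofReal_exp]
  ring

lemma hasDerivAt_symbolDeriv (k x : ℝ) :
    HasDerivAt (symbolDeriv k) (symbolDeriv2 k x) x := by
  have hneg : HasDerivAt (fun y : ℝ => cexp (-(y : ℂ))) (-cexp (-(x : ℂ))) x := by
    simpa using hasDerivAt_cexp_mul_ofReal (-1) x
  refine (((hasDerivAt_cexp_mul_ofReal (I * k) x).sub hneg).const_mul (I * k)).congr_deriv ?_
  simp only [symbolDeriv2]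
  linear_combination (k : ℂ) ^ 2 * cexp (I * k * x) * I_mul_I

lemma continuous_symbolDeriv2 (k : ℝ) : Continuous (symbolDeriv2 k) := by
  unfold symbolDeriv2; fun_prop

lemma integral_sub_smul_symbolDeriv2 (k ξ : ℝ) :
    ∫ u in (0 : ℝ)..ξ, (ξ - u) • symbolDeriv2 k u = symbol k ξ := by
  rw [intervalIntegral.integral_sub_smul_eq_taylor (hasDerivAt_symbol k)
    (hasDerivAt_symbolDeriv k) (continuous_symbolDeriv2 k)]
  simp [symbol, symbolDeriv]

lemma norm_symbolDeriv2_le (k : ℝ) {u : ℝ} (hu : 0 ≤ u) :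
    ‖symbolDeriv2 k u‖ ≤ |k| + k ^ 2 := by
  have h₁ : ‖I * k * cexp (-(u : ℂ))‖ ≤ |k| := by
    rw [norm_mul, norm_mul, norm_I, one_mul, norm_real, Real.norm_eq_abs, ← ofReal_neg,
      norm_exp_ofReal]
    exact mul_le_of_le_one_right (abs_nonneg k) (Real.exp_le_one_iff.mpr (by linarith))
  have h₂ : ‖(k : ℂ) ^ 2 * cexp (I * k * u)‖ = k ^ 2 := by
    have : I * k * u = ((k * u : ℝ) : ℂ) * I := by push_cast; ring
    rw [norm_mul, this, norm_exp_ofReal_mul_I, mul_one,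
      norm_pow, norm_real, Real.norm_eq_abs, sq_abs]
  calc ‖symbolDeriv2 k u‖ ≤ _ := norm_sub_le _ _
    _ ≤ |k| + k ^ 2 := by rw [h₂]; gcongr

end CompensatedChar

noncomputable def secondRightIntegral (φ : ℝ → ℝ) (u : ℝ) : ℝ :=
  ∫ ξ in Ioi u, (ξ - u) * φ ξ

section TaylorKernel

variable {E : Type*} [NormedAddCommGroup E] [NormedSpace ℝ E]

noncomputable def taylorKernel (φ : ℝ → ℝ) (g : ℝ → E) : ℝ × ℝ → E :=
  {p | p.2 < p.1}.indicator fun p => ((p.1 - p.2) * φ p.1) • g p.2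

lemma restrict_Ioi_restrict_Iio (ξ : ℝ) :
    (volume.restrict (Ioi (0 : ℝ))).restrict (Iio ξ) = volume.restrict (Ioo 0 ξ) := by
  rw [Measure.restrict_restrict measurableSet_Iio, Iio_inter_Ioi]

lemma restrict_Ioi_restrict_Ioi {u : ℝ} (hu : 0 ≤ u) :
    (volume.restrict (Ioi (0 : ℝ))).restrict (Ioi u) = volume.restrict (Ioi u) := by
  rw [Measure.restrict_restrict measurableSet_Ioi, Ioi_inter_Ioi, max_eq_left hu]

variable (φ : ℝ → ℝ) (g : ℝ → E)

lemma taylorKernel_apply_eq_indicator_Iio (ξ u : ℝ) :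
    taylorKernel φ g (ξ, u) = (Iio ξ).indicator (fun u => ((ξ - u) * φ ξ) • g u) u := by
  rfl

lemma taylorKernel_apply_eq_indicator_Ioi (ξ u : ℝ) :
    taylorKernel φ g (ξ, u) = (Ioi u).indicator (fun ξ => ((ξ - u) * φ ξ) • g u) ξ := by
  rfl

lemma integrable_taylorKernel (hφ : Measurable φ)
    (hint : IntegrableOn (fun ξ => ξ ^ 2 * |φ ξ|) (Ioi 0)) (hg : Continuous g) {C : ℝ}
    (hgC : ∀ u, 0 < u → ‖g u‖ ≤ C) :
    Integrable (taylorKernel φ g)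
      ((volume.restrict (Ioi (0 : ℝ))).prod (volume.restrict (Ioi 0))) := by
  have hmeas : AEStronglyMeasurable (taylorKernel φ g)
      ((volume.restrict (Ioi (0 : ℝ))).prod (volume.restrict (Ioi 0))) :=
    ((((measurable_fst.sub measurable_snd).mul (hφ.comp measurable_fst)).stronglyMeasurable.smul
      (hg.stronglyMeasurable.comp_measurable measurable_snd)).indicator
      (measurableSet_lt measurable_snd measurable_fst)).aestronglyMeasurable
  have hcont (ξ : ℝ) : Continuous fun u => ((ξ - u) * φ ξ) • g u := by fun_prop
  refine (integrable_prod_iff hmeas).2 ⟨.of_forall fun ξ => ?_, ?_⟩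
  · simp only [taylorKernel_apply_eq_indicator_Iio]
    rw [integrable_indicator_iff measurableSet_Iio, IntegrableOn, restrict_Ioi_restrict_Iio]
    exact (hcont ξ).integrableOn_Icc.mono_set Ioo_subset_Icc_self
  refine (hint.const_mul C).mono' hmeas.norm.integral_prod_right' ?_
  filter_upwards [self_mem_ae_restrict measurableSet_Ioi] with ξ (hξ : 0 < ξ)
  have hbound : ∀ u ∈ Ioo 0 ξ, ‖‖((ξ - u) * φ ξ) • g u‖‖ ≤ ξ * |φ ξ| * C := by
    intro u hu
    rw [norm_norm, norm_smul, norm_mul, Real.norm_eq_abs, Real.norm_eq_abs,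
      abs_of_pos (sub_pos.2 hu.2)]
    gcongr
    · linarith [hu.1]
    · exact hgC u hu.1
  simp only [taylorKernel_apply_eq_indicator_Iio, norm_indicator_eq_indicator_norm,
    integral_indicator measurableSet_Iio, restrict_Ioi_restrict_Iio]
  calc ‖∫ u in Ioo 0 ξ, ‖((ξ - u) * φ ξ) • g u‖‖
      ≤ ξ * |φ ξ| * C * volume.real (Ioo 0 ξ) :=
        norm_setIntegral_le_of_norm_le_const measure_Ioo_lt_top hbound
    _ = C * (ξ ^ 2 * |φ ξ|) := by rw [volume_real_Ioo_of_le hξ.le]; ring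

lemma integral_taylorKernel_snd {ξ : ℝ} (hξ : 0 ≤ ξ) :
    ∫ u, taylorKernel φ g (ξ, u) ∂volume.restrict (Ioi 0) =
      φ ξ • ∫ u in 0..ξ, (ξ - u) • g u := by
  simp only [taylorKernel_apply_eq_indicator_Iio, integral_indicator measurableSet_Iio,
    restrict_Ioi_restrict_Iio, intervalIntegral.integral_of_le hξ, integral_Ioc_eq_integral_Ioo,
    ← integral_smul, smul_smul, mul_comm]

variable [CompleteSpace E]

lemma integral_taylorKernel_fst {u : ℝ} (hu : 0 ≤ u) :
    ∫ ξ, taylorKernel φ g (ξ, u) ∂volume.restrict (Ioi 0) = secondRightIntegral φ u • g u := by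
  simp only [taylorKernel_apply_eq_indicator_Ioi, integral_indicator measurableSet_Ioi,
    restrict_Ioi_restrict_Ioi hu, integral_smul_const, secondRightIntegral]

theorem integral_smul_taylor_eq_integral_secondRightIntegral_smul (hφ : Measurable φ)
    (hint : IntegrableOn (fun ξ => ξ ^ 2 * |φ ξ|) (Ioi 0)) (hg : Continuous g) {C : ℝ}
    (hgC : ∀ u, 0 < u → ‖g u‖ ≤ C) :
    IntegrableOn (fun ξ => φ ξ • ∫ u in 0..ξ, (ξ - u) • g u) (Ioi 0) ∧
      IntegrableOn (fun u => secondRightIntegral φ u • g u) (Ioi 0) ∧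
      ∫ ξ in Ioi 0, φ ξ • ∫ u in 0..ξ, (ξ - u) • g u =
        ∫ u in Ioi 0, secondRightIntegral φ u • g u := by
  have hK := integrable_taylorKernel φ g hφ hint hg hgC
  have hsnd : (fun ξ => ∫ u, taylorKernel φ g (ξ, u) ∂volume.restrict (Ioi 0))
      =ᵐ[volume.restrict (Ioi 0)] fun ξ => φ ξ • ∫ u in 0..ξ, (ξ - u) • g u := by
    filter_upwards [self_mem_ae_restrict measurableSet_Ioi] with ξ (hξ : 0 < ξ)
    exact integral_taylorKernel_snd φ g hξ.le
  have hfst : (fun u => ∫ ξ, taylorKernel φ g (ξ, u) ∂volume.restrict (Ioi 0))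
      =ᵐ[volume.restrict (Ioi 0)] fun u => secondRightIntegral φ u • g u := by
    filter_upwards [self_mem_ae_restrict measurableSet_Ioi] with u (hu : 0 < u)
    exact integral_taylorKernel_fst φ g hu.le
  refine ⟨hK.integral_prod_left.congr hsnd, hK.integral_prod_right.congr hfst, ?_⟩
  rw [← integral_congr_ae hsnd, ← integral_congr_ae hfst]
  exact integral_integral_swap hK

end TaylorKernel

/-- **Second equality in (42).** For measurable `φ̃` with `∫₀^∞ ξ²|φ̃(ξ)| dξ < ∞` and
second right-sided integral `(I²_-φ̃)(ξ) = ∫_ξ^∞ (u-ξ)φ̃(u) du`, both integrals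
`∫₀^∞ φ̃(ξ)[(-1+e^{-ξ})(ik) + e^{ikξ} - 1] dξ` and
`∫₀^∞ (I²_-φ̃)(ξ)[ik e^{-ξ} - k² e^{ikξ}] dξ` converge absolutely and are equal. -/
theorem stmt16 (φt : ℝ → ℝ) (hmeas : Measurable φt)
    (hint : IntegrableOn (fun ξ => ξ^2 * |φt ξ|) (Ioi (0:ℝ)))
    (I2 : ℝ → ℝ)
    (hI2 : ∀ ξ : ℝ, 0 < ξ → I2 ξ = ∫ u in Ioi ξ, (u - ξ) * φt u) :
    ∀ k : ℝ,
      IntegrableOn (fun ξ : ℝ => (φt ξ : ℂ) *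
          (((-1 + Real.exp (-ξ) : ℝ) : ℂ) * (Complex.I * k) +
            Complex.exp (Complex.I * k * ξ) - 1)) (Ioi (0:ℝ)) ∧
      IntegrableOn (fun ξ : ℝ => (I2 ξ : ℂ) *
          (Complex.I * k * Complex.exp (-(ξ:ℂ)) -
            (k:ℂ)^2 * Complex.exp (Complex.I * k * ξ))) (Ioi (0:ℝ)) ∧
      (∫ ξ in Ioi (0:ℝ), (φt ξ : ℂ) *
          (((-1 + Real.exp (-ξ) : ℝ) : ℂ) * (Complex.I * k) +
            Complex.exp (Complex.I * k * ξ) - 1))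
        = ∫ ξ in Ioi (0:ℝ), (I2 ξ : ℂ) *
          (Complex.I * k * Complex.exp (-(ξ:ℂ)) -
            (k:ℂ)^2 * Complex.exp (Complex.I * k * ξ)) := by
  intro k
  have hsymbol : ∀ ξ, (φt ξ : ℂ) * CompensatedChar.symbol k ξ =
      φt ξ • ∫ u in (0 : ℝ)..ξ, (ξ - u) • CompensatedChar.symbolDeriv2 k u := fun ξ => by
    rw [CompensatedChar.integral_sub_smul_symbolDeriv2, real_smul]
  have hI2' : EqOn (fun ξ => (I2 ξ : ℂ) * CompensatedChar.symbolDeriv2 k ξ)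
      (fun ξ => secondRightIntegral φt ξ • CompensatedChar.symbolDeriv2 k ξ) (Ioi 0) :=
    fun ξ hξ => by dsimp only; rw [hI2 ξ hξ, real_smul, secondRightIntegral]
  obtain ⟨hL, hR, heq⟩ := integral_smul_taylor_eq_integral_secondRightIntegral_smul φt
    (CompensatedChar.symbolDeriv2 k) hmeas hint (CompensatedChar.continuous_symbolDeriv2 k)
    (fun u hu => CompensatedChar.norm_symbolDeriv2_le k hu.le)
  rw [← funext hsymbol] at hL heq
  exact ⟨hL, (integrableOn_congr_fun hI2' measurableSet_Ioi).2 hR,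
    heq.trans (setIntegral_congr_fun measurableSet_Ioi hI2').symm⟩
end
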